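/- The map ψ: H⊗H → H⊗H, ψ(h'⊗h) = h⁽²⁾ ⊗ S⁻¹(h⁽¹⁾)h'h⁽³⁾, is an entwining structure on H: it satisfies ψ∘(id⊗μ) = (μ⊗id)∘(id⊗ψ)∘(ψ⊗id), (id⊗Δ)∘ψ = (ψ⊗id)∘(id⊗ψ)∘(Δ⊗id), ψ(h'⊗1) = 1⊗h', and (id⊗ε)∘ψ = ε⊗id. -/

import Mathlib

set_option synthInstance.maxHeartbeats 1000000
set_option maxHeartbeats 1000000


open TensorProduct LinearMap Coalgebra

noncomputable section

variable (k : Type) [Field k] (H : Type) [Ring H] [HopfAlgebra k H]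
variable (M : Type) [AddCommGroup M] [Module k M]

/-- The right-hand side `m⁽⁰⁾h⁽²⁾ ⊗ S⁻¹(h⁽¹⁾)m⁽¹⁾h⁽³⁾` of the right-right
anti-Yetter-Drinfeld condition, as a linear map `M ⊗ H → M ⊗ H`, where `Sinv`
plays the role of the inverse of the antipode. -/
def aydRHSrr (Sinv : H →ₗ[k] H) (act : M ⊗[k] H →ₗ[k] M)
    (coact : M →ₗ[k] M ⊗[k] H) : M ⊗[k] H →ₗ[k] M ⊗[k] H :=
  map act (mul' k H ∘ₗ map (mul' k H ∘ₗ map Sinv LinearMap.id) LinearMap.id)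
    ∘ₗ map LinearMap.id (TensorProduct.assoc k H H H).symm.toLinearMap
    ∘ₗ (TensorProduct.leftComm k H (M ⊗[k] H) (H ⊗[k] H)).toLinearMap
    ∘ₗ (TensorProduct.assoc k H (M ⊗[k] H) (H ⊗[k] H)).toLinearMap
    ∘ₗ map (TensorProduct.leftComm k M H H).toLinearMap LinearMap.id
    ∘ₗ (tensorTensorTensorComm k M H (H ⊗[k] H) H).toLinearMap
    ∘ₗ map coact (map comul LinearMap.id ∘ₗ comul)

/-- The right-right anti-Yetter-Drinfeld condition
`Δ_M(m·h) = m⁽⁰⁾h⁽²⁾ ⊗ S⁻¹(h⁽¹⁾)m⁽¹⁾h⁽³⁾`. -/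
def IsAYDrr (Sinv : H →ₗ[k] H) (act : M ⊗[k] H →ₗ[k] M)
    (coact : M →ₗ[k] M ⊗[k] H) : Prop :=
  coact ∘ₗ act = aydRHSrr k H M Sinv act coact

/-- The entwining map `ψ(h'⊗h) = h⁽²⁾ ⊗ S⁻¹(h⁽¹⁾)h'h⁽³⁾`. -/
def psiAYD (Sinv : H →ₗ[k] H) : H ⊗[k] H →ₗ[k] H ⊗[k] H :=
  map LinearMap.id
      (mul' k H ∘ₗ map (mul' k H ∘ₗ map Sinv LinearMap.id) LinearMap.id)
    ∘ₗ map LinearMap.id (TensorProduct.assoc k H H H).symm.toLinearMap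
    ∘ₗ (TensorProduct.leftComm k H H (H ⊗[k] H)).toLinearMap
    ∘ₗ (TensorProduct.assoc k H H (H ⊗[k] H)).toLinearMap
    ∘ₗ (TensorProduct.leftComm k H (H ⊗[k] H) H).toLinearMap
    ∘ₗ map LinearMap.id (map comul LinearMap.id ∘ₗ comul)

/-- `M` is an entwined module for the entwining map `ψ`:
`Δ_M(m·h) = m⁽⁰⁾·ψ(m⁽¹⁾⊗h)`. -/
def IsEntwined (ψ : H ⊗[k] H →ₗ[k] H ⊗[k] H) (act : M ⊗[k] H →ₗ[k] M)
    (coact : M →ₗ[k] M ⊗[k] H) : Prop :=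
  coact ∘ₗ act =
    map act LinearMap.id ∘ₗ (TensorProduct.assoc k M H H).symm.toLinearMap
      ∘ₗ map LinearMap.id ψ ∘ₗ (TensorProduct.assoc k M H H).toLinearMap
      ∘ₗ map coact LinearMap.id


section Conv
variable {C A : Type} [AddCommGroup C] [Module k C] [Coalgebra k C] [Ring A] [Algebra k A]

/-- Convolution product. -/
def conv (f g : C →ₗ[k] A) : C →ₗ[k] A := mul' k A ∘ₗ map f g ∘ₗ comul

/-- Convolution unit. -/
def cunit : C →ₗ[k] A := Algebra.linearMap k A ∘ₗ counit

lemma conv_apply (f g : C →ₗ[k] A) (c : C) (r : Coalgebra.Repr k c (C × C)) :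
    conv k f g c = ∑ i ∈ r.index, f (r.left i) * g (r.right i) := by
  have : conv k f g c = mul' k A (map f g (comul c)) := rfl
  rw [this, ← r.eq]
  simp [map_sum]

lemma cunit_apply (c : C) : cunit k c = algebraMap k A (counit (R := k) c) := rfl

lemma sum_counit_smul {c : C} (r : Coalgebra.Repr k c (C × C)) :
    ∑ i ∈ r.index, counit (R := k) (r.left i) • r.right i = c := by
  have h := Coalgebra.sum_counit_tmul_eq r
  calc ∑ i ∈ r.index, counit (R := k) (r.left i) • r.right i
      = TensorProduct.lid k C (∑ i ∈ r.index, counit (R := k) (r.left i) ⊗ₜ[k] r.right i) := by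
        rw [map_sum]; rfl
    _ = TensorProduct.lid k C ((1:k) ⊗ₜ[k] c) := by rw [h]
    _ = c := by simp

lemma sum_smul_counit {c : C} (r : Coalgebra.Repr k c (C × C)) :
    ∑ i ∈ r.index, counit (R := k) (r.right i) • r.left i = c := by
  have h := Coalgebra.sum_tmul_counit_eq r
  calc ∑ i ∈ r.index, counit (R := k) (r.right i) • r.left i
      = TensorProduct.rid k C (∑ i ∈ r.index, r.left i ⊗ₜ[k] counit (R := k) (r.right i)) := by
        rw [map_sum]; rfl
    _ = TensorProduct.rid k C (c ⊗ₜ[k] (1:k)) := by rw [h]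
    _ = c := by simp

lemma conv_cunit_left (f : C →ₗ[k] A) : conv k (cunit k) f = f := by
  ext c
  rw [conv_apply k _ _ c (ℛ k c)]
  have := sum_counit_smul k (ℛ k c)
  calc ∑ i ∈ (ℛ k c).index, cunit k ((ℛ k c).left i) * f ((ℛ k c).right i)
      = ∑ i ∈ (ℛ k c).index, f (counit (R := k) ((ℛ k c).left i) • (ℛ k c).right i) := by
        refine Finset.sum_congr rfl fun i _ => ?_
        rw [cunit_apply, map_smul, Algebra.smul_def]
    _ = f c := by rw [← map_sum, this]

lemma conv_cunit_right (f : C →ₗ[k] A) : conv k f (cunit k) = f := by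
  ext c
  rw [conv_apply k _ _ c (ℛ k c)]
  have := sum_smul_counit k (ℛ k c)
  calc ∑ i ∈ (ℛ k c).index, f ((ℛ k c).left i) * cunit k ((ℛ k c).right i)
      = ∑ i ∈ (ℛ k c).index, f (counit (R := k) ((ℛ k c).right i) • (ℛ k c).left i) := by
        refine Finset.sum_congr rfl fun i _ => ?_
        rw [cunit_apply]
        rw [map_smul, Algebra.smul_def, Algebra.commutes]
    _ = f c := by rw [← map_sum, this]

lemma conv_assoc (f g h : C →ₗ[k] A) : conv k (conv k f g) h = conv k f (conv k g h) := by
  ext c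
  set r := ℛ k c
  set r1 : ∀ i : r.ι, Coalgebra.Repr k (r.left i) (C × C) := fun i => ℛ k (r.left i)
  set r2 : ∀ i : r.ι, Coalgebra.Repr k (r.right i) (C × C) := fun i => ℛ k (r.right i)
  have key := Coalgebra.sum_tmul_tmul_eq r r1 r2
  apply_fun (mul' k A ∘ₗ map f (mul' k A ∘ₗ map g h)) at key
  simp only [map_sum, coe_comp, Function.comp_apply, map_tmul, mul'_apply, id_coe, id_eq] at key
  rw [conv_apply k _ _ c r, conv_apply k _ _ c r]
  calc ∑ i ∈ r.index, conv k f g (r.left i) * h (r.right i)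
      = ∑ i ∈ r.index, ∑ j ∈ (r1 i).index,
          f ((r1 i).left j) * (g ((r1 i).right j) * h (r.right i)) := by
        refine Finset.sum_congr rfl fun i _ => ?_
        rw [conv_apply k _ _ _ (r1 i), Finset.sum_mul]
        simp [mul_assoc]
    _ = ∑ i ∈ r.index, ∑ j ∈ (r2 i).index,
          f (r.left i) * (g ((r2 i).left j) * h ((r2 i).right j)) := key
    _ = ∑ i ∈ r.index, f (r.left i) * conv k g h (r.right i) := by
        refine Finset.sum_congr rfl fun i _ => ?_
        rw [conv_apply k _ _ _ (r2 i), Finset.mul_sum]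

lemma conv_unique (F G M : C →ₗ[k] A) (h1 : conv k F M = cunit k)
    (h2 : conv k M G = cunit k) : F = G := by
  calc F = conv k F (cunit k) := (conv_cunit_right k F).symm
    _ = conv k F (conv k M G) := by rw [h2]
    _ = conv k (conv k F M) G := (conv_assoc k F M G).symm
    _ = conv k (cunit k) G := by rw [h1]
    _ = G := conv_cunit_left k G

end Conv

section Hopf
local notation "S" => HopfAlgebra.antipode (R := k) (A := H)

lemma conv_S_id : conv k (S) (LinearMap.id : H →ₗ[k] H) = cunit k := by
  have : conv k (S) (LinearMap.id : H →ₗ[k] H)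
      = mul' k H ∘ₗ (S).rTensor H ∘ₗ comul := rfl
  rw [this, HopfAlgebra.mul_antipode_rTensor_comul]; rfl

lemma conv_id_S : conv k (LinearMap.id : H →ₗ[k] H) (S) = cunit k := by
  have : conv k (LinearMap.id : H →ₗ[k] H) (S)
      = mul' k H ∘ₗ (S).lTensor H ∘ₗ comul := rfl
  rw [this, HopfAlgebra.mul_antipode_lTensor_comul]; rfl

lemma S_one : S (1 : H) = 1 := by
  have h := congrArg (fun f : H →ₗ[k] H => f 1) (conv_S_id k H)
  simp only [conv, cunit, coe_comp, Function.comp_apply] at h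
  rw [Bialgebra.comul_one, Algebra.TensorProduct.one_def] at h
  simpa using h

lemma counit_S (a : H) : counit (R := k) (S a) = counit (R := k) a := by
  set r := ℛ k a
  have h1 : counit (R := k) (∑ i ∈ r.index, S (r.left i) * r.right i)
      = counit (R := k) a := by
    rw [HopfAlgebra.sum_antipode_mul_eq_algebraMap_counit r]; simp
  have h2 : ∑ i ∈ r.index, counit (R := k) (S (r.left i)) * counit (R := k) (r.right i)
      = counit (R := k) a := by
    rw [← h1, map_sum]
    exact Finset.sum_congr rfl fun i _ => (Bialgebra.counit_mul _ _).symm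
  calc counit (R := k) (S a)
      = counit (R := k) (S (∑ i ∈ r.index, counit (R := k) (r.right i) • r.left i)) := by
        rw [sum_smul_counit]
    _ = ∑ i ∈ r.index, counit (R := k) (S (r.left i)) * counit (R := k) (r.right i) := by
        rw [map_sum, map_sum]
        refine Finset.sum_congr rfl fun i _ => ?_
        rw [map_smul, map_smul, smul_eq_mul, mul_comm]
    _ = counit (R := k) a := h2

lemma S_antimul_maps :
    (S) ∘ₗ mul' k H =
      mul' k H ∘ₗ map (S) (S) ∘ₗ (TensorProduct.comm k H H).toLinearMap := by
  refine conv_unique k _ _ (mul' k H) ?_ ?_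
  · -- conv F M = cunit
    apply TensorProduct.ext'
    intro a b
    set ra := ℛ k a; set rb := ℛ k b
    have hcom : Coalgebra.comul (R := k) (a ⊗ₜ[k] b) =
        ∑ i ∈ ra.index, ∑ j ∈ rb.index,
          (ra.left i ⊗ₜ[k] rb.left j) ⊗ₜ[k] (ra.right i ⊗ₜ[k] rb.right j) := by
      show (TensorProduct.tensorTensorTensorComm k H H H H).toLinearMap
        (map comul comul (a ⊗ₜ[k] b)) = _
      rw [map_tmul, ← ra.eq, ← rb.eq]
      simp only [sum_tmul, tmul_sum, map_sum, tensorTensorTensorComm_tmul]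
      exact Finset.sum_comm
    have lhs : conv k ((S) ∘ₗ mul' k H) (mul' k H) (a ⊗ₜ[k] b)
        = mul' k H ((S).rTensor H (comul (a * b))) := by
      have e1 : conv k ((S) ∘ₗ mul' k H) (mul' k H) (a ⊗ₜ[k] b)
          = mul' k H (map ((S) ∘ₗ mul' k H) (mul' k H) (Coalgebra.comul (R := k) (a ⊗ₜ[k] b))) :=
        rfl
      rw [e1, hcom, Bialgebra.comul_mul, ← ra.eq, ← rb.eq, Finset.sum_mul_sum]
      simp [map_sum, Algebra.TensorProduct.tmul_mul_tmul]
    rw [lhs, HopfAlgebra.mul_antipode_rTensor_comul_apply, cunit_apply]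
    show _ = algebraMap k H (counit (R := k) b • counit (R := k) a)
    rw [Bialgebra.counit_mul, smul_eq_mul, mul_comm]
  · -- conv M G = cunit
    apply TensorProduct.ext'
    intro a b
    set ra := ℛ k a; set rb := ℛ k b
    have hcom : Coalgebra.comul (R := k) (a ⊗ₜ[k] b) =
        ∑ i ∈ ra.index, ∑ j ∈ rb.index,
          (ra.left i ⊗ₜ[k] rb.left j) ⊗ₜ[k] (ra.right i ⊗ₜ[k] rb.right j) := by
      show (TensorProduct.tensorTensorTensorComm k H H H H).toLinearMap
        (map comul comul (a ⊗ₜ[k] b)) = _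
      rw [map_tmul, ← ra.eq, ← rb.eq]
      simp only [sum_tmul, tmul_sum, map_sum, tensorTensorTensorComm_tmul]
      exact Finset.sum_comm
    have e1 : conv k (mul' k H)
        (mul' k H ∘ₗ map (S) (S) ∘ₗ (TensorProduct.comm k H H).toLinearMap) (a ⊗ₜ[k] b)
        = mul' k H (map (mul' k H)
            (mul' k H ∘ₗ map (S) (S) ∘ₗ (TensorProduct.comm k H H).toLinearMap)
            (Coalgebra.comul (R := k) (a ⊗ₜ[k] b))) := rfl
    rw [e1, hcom]
    have e2 : ∀ i ∈ ra.index, ∀ j ∈ rb.index,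
        (mul' k H) (ra.left i ⊗ₜ[k] rb.left j) *
          (mul' k H (map (S) (S) ((TensorProduct.comm k H H)
            (ra.right i ⊗ₜ[k] rb.right j))))
        = ra.left i * ((rb.left j * S (rb.right j)) * S (ra.right i)) := by
      intro i _ j _
      simp [mul_assoc]
    rw [map_sum]
    simp only [map_sum, coe_comp, Function.comp_apply, LinearEquiv.coe_coe, map_tmul,
      mul'_apply, comm_tmul]
    calc ∑ i ∈ ra.index, ∑ j ∈ rb.index,
          (ra.left i * rb.left j) * (S (rb.right j) * S (ra.right i))
        = ∑ i ∈ ra.index, ra.left i *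
            ((∑ j ∈ rb.index, rb.left j * S (rb.right j)) * S (ra.right i)) := by
          refine Finset.sum_congr rfl fun i _ => ?_
          conv_rhs => rw [Finset.sum_mul, Finset.mul_sum]
          exact Finset.sum_congr rfl fun j _ => by simp only [mul_assoc]
    _ = ∑ i ∈ ra.index, ra.left i * (algebraMap k H (counit (R := k) b) * S (ra.right i)) := by
          rw [HopfAlgebra.sum_mul_antipode_eq_algebraMap_counit rb]
    _ = counit (R := k) b • ∑ i ∈ ra.index, ra.left i * S (ra.right i) := by
          rw [Finset.smul_sum]
          refine Finset.sum_congr rfl fun i _ => ?_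
          rw [← Algebra.smul_def, mul_smul_comm]
    _ = cunit k (a ⊗ₜ[k] b) := by
          rw [HopfAlgebra.sum_mul_antipode_eq_algebraMap_counit ra, cunit_apply]
          show _ = algebraMap k H (counit (R := k) b • counit (R := k) a)
          rw [Algebra.smul_def, ← map_mul, smul_eq_mul]

lemma S_mul (a b : H) : S (a * b) = S b * S a := by
  have h := congrArg (fun f : H ⊗[k] H →ₗ[k] H => f (a ⊗ₜ[k] b)) (S_antimul_maps k H)
  simpa using h


/-- `h1⊗(h2⊗(h3⊗h4)) ↦ (h1 * S h4) ⊗ (h2 * S h3)` -/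
def theta4 : H ⊗[k] (H ⊗[k] (H ⊗[k] H)) →ₗ[k] H ⊗[k] H :=
  map (mul' k H ∘ₗ map LinearMap.id (S)) (mul' k H ∘ₗ map LinearMap.id (S))
    ∘ₗ (TensorProduct.assoc k H H (H ⊗[k] H)).symm.toLinearMap
    ∘ₗ (LinearMap.lTensor H (TensorProduct.leftComm k H H H).toLinearMap)
    ∘ₗ (LinearMap.lTensor H (LinearMap.lTensor H (TensorProduct.comm k H H).toLinearMap))

lemma theta4_tmul (h1 h2 h3 h4 : H) :
    theta4 k H (h1 ⊗ₜ[k] (h2 ⊗ₜ[k] (h3 ⊗ₜ[k] h4))) = (h1 * S h4) ⊗ₜ[k] (h2 * S h3) := by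
  simp [theta4, TensorProduct.leftComm]

lemma exp4 (a : H) (r : Coalgebra.Repr k a (H × H)) (s : ∀ i : r.ι, Coalgebra.Repr k (r.left i) (H × H))
    (u : ∀ i : r.ι, Coalgebra.Repr k (r.right i) (H × H))
    (w : ∀ i : r.ι, ∀ j : (u i).ι, Coalgebra.Repr k ((u i).left j) (H × H)) :
    ∑ i ∈ r.index, ∑ p ∈ (s i).index, ∑ j ∈ (u i).index,
      (s i).left p ⊗ₜ[k] ((s i).right p ⊗ₜ[k] ((u i).left j ⊗ₜ[k] (u i).right j))
    = ∑ i ∈ r.index, ∑ j ∈ (u i).index, ∑ m ∈ (w i j).index,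
      r.left i ⊗ₜ[k] ((w i j).left m ⊗ₜ[k] ((w i j).right m ⊗ₜ[k] (u i).right j)) := by
  have key := Coalgebra.sum_tmul_tmul_eq r s u
  apply_fun (LinearMap.lTensor H (LinearMap.lTensor H (Coalgebra.comul (R := k)))) at key
  simp only [map_sum, lTensor_tmul] at key
  calc ∑ i ∈ r.index, ∑ p ∈ (s i).index, ∑ j ∈ (u i).index,
      (s i).left p ⊗ₜ[k] ((s i).right p ⊗ₜ[k] ((u i).left j ⊗ₜ[k] (u i).right j))
      = ∑ i ∈ r.index, ∑ p ∈ (s i).index,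
          (s i).left p ⊗ₜ[k] ((s i).right p ⊗ₜ[k] comul (r.right i)) := by
        refine Finset.sum_congr rfl fun i _ => Finset.sum_congr rfl fun p _ => ?_
        rw [← (u i).eq, tmul_sum, tmul_sum]
    _ = ∑ i ∈ r.index, ∑ j ∈ (u i).index,
          r.left i ⊗ₜ[k] ((u i).left j ⊗ₜ[k] comul ((u i).right j)) := key
    _ = ∑ i ∈ r.index, ∑ j ∈ (u i).index, ∑ m ∈ (w i j).index,
          r.left i ⊗ₜ[k] ((w i j).left m ⊗ₜ[k] ((w i j).right m ⊗ₜ[k] (u i).right j)) := by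
        refine Finset.sum_congr rfl fun i _ => ?_
        have inner : ∑ j ∈ (u i).index, (u i).left j ⊗ₜ[k] comul ((u i).right j)
            = ∑ j ∈ (u i).index, ∑ m ∈ (w i j).index,
              (w i j).left m ⊗ₜ[k] ((w i j).right m ⊗ₜ[k] (u i).right j) := by
          have c1 : ∑ j ∈ (u i).index, (u i).left j ⊗ₜ[k] comul ((u i).right j)
              = (Coalgebra.comul (R := k)).lTensor H (comul (r.right i)) := by
            rw [← (u i).eq, map_sum]; rfl
          have c2 : (TensorProduct.assoc k H H H)
              ((Coalgebra.comul (R := k)).rTensor H (comul (r.right i)))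
              = ∑ j ∈ (u i).index, ∑ m ∈ (w i j).index,
              (w i j).left m ⊗ₜ[k] ((w i j).right m ⊗ₜ[k] (u i).right j) := by
            rw [← (u i).eq, map_sum, map_sum]
            refine Finset.sum_congr rfl fun j _ => ?_
            rw [rTensor_tmul, ← (w i j).eq, sum_tmul, map_sum]
            exact Finset.sum_congr rfl fun m _ => by rw [assoc_tmul]
          rw [c1, ← Coalgebra.coassoc_apply, c2]
        rw [← tmul_sum, inner, tmul_sum]
        exact Finset.sum_congr rfl fun j _ => by rw [tmul_sum]

lemma S_anticomul_maps : (Coalgebra.comul (R := k) (A := H)) ∘ₗ (S)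
    = map (S) (S) ∘ₗ (TensorProduct.comm k H H).toLinearMap ∘ₗ comul := by
  refine conv_unique k _ _ (Coalgebra.comul (R := k) (A := H)) ?_ ?_
  · ext a
    rw [conv_apply k _ _ a (ℛ k a)]
    set r := ℛ k a
    calc ∑ i ∈ r.index, (comul ∘ₗ (S)) (r.left i) * comul (r.right i)
        = comul (R := k) (∑ i ∈ r.index, S (r.left i) * r.right i) := by
          rw [map_sum]
          exact Finset.sum_congr rfl fun i _ => (Bialgebra.comul_mul _ _).symm
      _ = cunit k a := by
          rw [HopfAlgebra.sum_antipode_mul_eq_algebraMap_counit r, cunit_apply, Bialgebra.comul_algebraMap]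
  · ext a
    rw [conv_apply k _ _ a (ℛ k a)]
    set r := ℛ k a
    set s : ∀ i : r.ι, Coalgebra.Repr k (r.left i) (H × H) := fun i => ℛ k (r.left i)
    set u : ∀ i : r.ι, Coalgebra.Repr k (r.right i) (H × H) := fun i => ℛ k (r.right i)
    set w : ∀ i : r.ι, ∀ j : (u i).ι, Coalgebra.Repr k ((u i).left j) (H × H) :=
      fun i j => ℛ k ((u i).left j)
    have key := exp4 k H a r s u w
    apply_fun theta4 k H at key
    simp only [map_sum, theta4_tmul] at key
    calc ∑ i ∈ r.index, comul (R := k) (r.left i) *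
          (map (S) (S) ∘ₗ (TensorProduct.comm k H H).toLinearMap ∘ₗ comul) (r.right i)
        = ∑ i ∈ r.index, ∑ p ∈ (s i).index, ∑ j ∈ (u i).index,
            ((s i).left p * S ((u i).right j)) ⊗ₜ[k] ((s i).right p * S ((u i).left j)) := by
          refine Finset.sum_congr rfl fun i _ => ?_
          have hG : (map (S) (S) ∘ₗ (TensorProduct.comm k H H).toLinearMap ∘ₗ comul)
              (r.right i)
              = ∑ j ∈ (u i).index, S ((u i).right j) ⊗ₜ[k] S ((u i).left j) := by
            show map (S) (S) ((TensorProduct.comm k H H) (comul (r.right i))) = _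
            rw [← (u i).eq, map_sum, map_sum]
            exact Finset.sum_congr rfl fun j _ => by rw [comm_tmul, map_tmul]
          rw [hG, ← (s i).eq, Finset.sum_mul_sum]
          exact Finset.sum_congr rfl fun p _ => Finset.sum_congr rfl fun j _ => by
            rw [Algebra.TensorProduct.tmul_mul_tmul]
      _ = ∑ i ∈ r.index, ∑ j ∈ (u i).index, ∑ m ∈ (w i j).index,
            (r.left i * S ((u i).right j)) ⊗ₜ[k] ((w i j).left m * S ((w i j).right m)) := key
      _ = ∑ i ∈ r.index, (r.left i * S (r.right i)) ⊗ₜ[k] (1 : H) := by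
          refine Finset.sum_congr rfl fun i _ => ?_
          calc ∑ j ∈ (u i).index, ∑ m ∈ (w i j).index,
                (r.left i * S ((u i).right j)) ⊗ₜ[k] ((w i j).left m * S ((w i j).right m))
              = ∑ j ∈ (u i).index,
                  (r.left i * S ((u i).right j)) ⊗ₜ[k] algebraMap k H
                    (counit (R := k) ((u i).left j)) := by
                refine Finset.sum_congr rfl fun j _ => ?_
                rw [← tmul_sum, HopfAlgebra.sum_mul_antipode_eq_algebraMap_counit (w i j)]
            _ = ∑ j ∈ (u i).index, (counit (R := k) ((u i).left j) •
                  (r.left i * S ((u i).right j))) ⊗ₜ[k] (1 : H) := by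
                refine Finset.sum_congr rfl fun j _ => ?_
                rw [Algebra.algebraMap_eq_smul_one]
                exact (smul_tmul _ _ _).symm
            _ = (r.left i * S (∑ j ∈ (u i).index,
                  counit (R := k) ((u i).left j) • (u i).right j)) ⊗ₜ[k] (1 : H) := by
                rw [← sum_tmul, map_sum, Finset.mul_sum]
                refine congrArg (· ⊗ₜ[k] (1:H)) (Finset.sum_congr rfl fun j _ => ?_)
                rw [map_smul, mul_smul_comm]
            _ = (r.left i * S (r.right i)) ⊗ₜ[k] (1 : H) := by
                rw [sum_counit_smul]
      _ = cunit k a := by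
          rw [← sum_tmul, HopfAlgebra.sum_mul_antipode_eq_algebraMap_counit r]
          rfl


section SinvPart
variable (Sinv : H →ₗ[k] H)
  (hSinv1 : Sinv ∘ₗ HopfAlgebra.antipode (R := k) = LinearMap.id)
  (hSinv2 : HopfAlgebra.antipode (R := k) ∘ₗ Sinv = LinearMap.id)

include hSinv1 in
lemma Sinv_S (x : H) : Sinv (S x) = x := LinearMap.congr_fun hSinv1 x

include hSinv2 in
lemma S_Sinv (x : H) : S (Sinv x) = x := LinearMap.congr_fun hSinv2 x

include hSinv1 in
lemma Sinv_one : Sinv (1 : H) = 1 := by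
  have h := Sinv_S k H Sinv hSinv1 (1 : H)
  rwa [S_one] at h

include hSinv2 in
lemma counit_Sinv (x : H) : counit (R := k) (Sinv x) = counit (R := k) x := by
  conv_rhs => rw [← S_Sinv k H Sinv hSinv2 x]
  rw [counit_S]

include hSinv1 hSinv2 in
lemma Sinv_mul (a b : H) : Sinv (a * b) = Sinv b * Sinv a := by
  calc Sinv (a * b) = Sinv (S (Sinv a) * S (Sinv b)) := by
        rw [S_Sinv k H Sinv hSinv2, S_Sinv k H Sinv hSinv2]
    _ = Sinv (S (Sinv b * Sinv a)) := by rw [S_mul]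
    _ = Sinv b * Sinv a := Sinv_S k H Sinv hSinv1 _

include hSinv1 hSinv2 in
lemma Sinv_comul_repr (x : H) (r : Coalgebra.Repr k x (H × H)) :
    Coalgebra.comul (R := k) (Sinv x)
      = ∑ i ∈ r.index, Sinv (r.right i) ⊗ₜ[k] Sinv (r.left i) := by
  have h1 : Coalgebra.comul (R := k) x
      = map (S) (S) ((TensorProduct.comm k H H) (comul (Sinv x))) := by
    conv_lhs => rw [← S_Sinv k H Sinv hSinv2 x]
    exact LinearMap.congr_fun (S_anticomul_maps k H) (Sinv x)
  have h2 : map Sinv Sinv (Coalgebra.comul (R := k) x)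
      = (TensorProduct.comm k H H) (comul (Sinv x)) := by
    rw [h1]
    generalize (TensorProduct.comm k H H) (Coalgebra.comul (R := k) (Sinv x)) = t
    induction t using TensorProduct.induction_on with
    | zero => simp
    | tmul a b => simp [Sinv_S k H Sinv hSinv1]
    | add a b ha hb => simp [ha, hb]
  have h3 : Coalgebra.comul (R := k) (Sinv x)
      = (TensorProduct.comm k H H).symm (map Sinv Sinv (Coalgebra.comul (R := k) x)) := by
    rw [h2, LinearEquiv.symm_apply_apply]
  rw [h3, ← r.eq]
  rw [map_sum, map_sum]
  exact Finset.sum_congr rfl fun i _ => by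
    rw [map_tmul, TensorProduct.comm_symm_tmul]

end SinvPart

section Psi
variable (Sinv : H →ₗ[k] H)

/-- the part of `psiAYD` after the initial comultiplications -/
def psiTail : H ⊗[k] ((H ⊗[k] H) ⊗[k] H) →ₗ[k] H ⊗[k] H :=
  map LinearMap.id
      (mul' k H ∘ₗ map (mul' k H ∘ₗ map Sinv LinearMap.id) LinearMap.id)
    ∘ₗ map LinearMap.id (TensorProduct.assoc k H H H).symm.toLinearMap
    ∘ₗ (TensorProduct.leftComm k H H (H ⊗[k] H)).toLinearMap
    ∘ₗ (TensorProduct.assoc k H H (H ⊗[k] H)).toLinearMap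
    ∘ₗ (TensorProduct.leftComm k H (H ⊗[k] H) H).toLinearMap

lemma psiAYD_eq : psiAYD k H Sinv
    = psiTail k H Sinv ∘ₗ map LinearMap.id (map comul LinearMap.id ∘ₗ comul) := by
  rw [psiAYD, psiTail]
  simp only [LinearMap.comp_assoc]

lemma psiTail_tmul (x y z w : H) :
    psiTail k H Sinv (x ⊗ₜ[k] ((y ⊗ₜ[k] z) ⊗ₜ[k] w)) = z ⊗ₜ[k] (Sinv y * x * w) := by
  simp [psiTail, TensorProduct.leftComm]

lemma psi_apply (x h : H) (r : Coalgebra.Repr k h (H × H))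
    (s : ∀ i : r.ι, Coalgebra.Repr k (r.left i) (H × H)) :
    psiAYD k H Sinv (x ⊗ₜ[k] h) = ∑ i ∈ r.index, ∑ j ∈ (s i).index,
      (s i).right j ⊗ₜ[k] (Sinv ((s i).left j) * x * r.right i) := by
  rw [psiAYD_eq]
  have hD : (map (Coalgebra.comul (R := k)) LinearMap.id ∘ₗ comul) h
      = ∑ i ∈ r.index, ∑ j ∈ (s i).index,
        (((s i).left j ⊗ₜ[k] (s i).right j) ⊗ₜ[k] r.right i) := by
    show map comul LinearMap.id (comul h) = _
    rw [← r.eq, map_sum]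
    refine Finset.sum_congr rfl fun i _ => ?_
    rw [map_tmul, ← (s i).eq, sum_tmul]
    rfl
  show psiTail k H Sinv (map LinearMap.id (map comul LinearMap.id ∘ₗ comul) (x ⊗ₜ[k] h)) = _
  rw [map_tmul, id_coe, id_eq, hD, tmul_sum, map_sum]
  refine Finset.sum_congr rfl fun i _ => ?_
  rw [tmul_sum, map_sum]
  exact Finset.sum_congr rfl fun j _ => psiTail_tmul k H Sinv _ _ _ _

lemma Dmap_eq : (map (Coalgebra.comul (R := k)) LinearMap.id ∘ₗ Coalgebra.comul (R := k)
      : H →ₗ[k] (H ⊗[k] H) ⊗[k] H)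
    = ((Algebra.TensorProduct.map (Bialgebra.comulAlgHom k H) (AlgHom.id k H)).comp
        (Bialgebra.comulAlgHom k H)).toLinearMap := rfl

lemma D_mul (a b : H) :
    (map (Coalgebra.comul (R := k)) LinearMap.id ∘ₗ Coalgebra.comul (R := k)) (a * b)
    = ((map (Coalgebra.comul (R := k)) LinearMap.id ∘ₗ Coalgebra.comul (R := k)) a)
      * ((map (Coalgebra.comul (R := k)) LinearMap.id ∘ₗ Coalgebra.comul (R := k)) b) := by
  rw [Dmap_eq]
  exact map_mul ((Algebra.TensorProduct.map (Bialgebra.comulAlgHom k H)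
    (AlgHom.id k H)).comp (Bialgebra.comulAlgHom k H)) a b

lemma stmt3 (hSinv1 : Sinv ∘ₗ HopfAlgebra.antipode (R := k) = LinearMap.id) (h' : H) :
    psiAYD k H Sinv (h' ⊗ₜ[k] (1 : H)) = (1 : H) ⊗ₜ[k] h' := by
  rw [psiAYD_eq]
  have hD : (map (Coalgebra.comul (R := k)) LinearMap.id ∘ₗ comul) (1 : H)
      = ((1 : H) ⊗ₜ[k] (1 : H)) ⊗ₜ[k] (1 : H) := by
    show map comul LinearMap.id (comul (1 : H)) = _
    rw [Bialgebra.comul_one, Algebra.TensorProduct.one_def, map_tmul, Bialgebra.comul_one,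
      Algebra.TensorProduct.one_def]
    rfl
  show psiTail k H Sinv (map LinearMap.id (map comul LinearMap.id ∘ₗ comul) (h' ⊗ₜ[k] (1:H))) = _
  rw [map_tmul, id_coe, id_eq, hD, psiTail_tmul, Sinv_one k H Sinv hSinv1, one_mul, mul_one]

lemma stmt4 (hSinv2 : HopfAlgebra.antipode (R := k) ∘ₗ Sinv = LinearMap.id) :
    (TensorProduct.rid k H).toLinearMap
        ∘ₗ map LinearMap.id (counit (R := k) (A := H)) ∘ₗ psiAYD k H Sinv =
      (TensorProduct.lid k H).toLinearMap
        ∘ₗ map (counit (R := k) (A := H)) LinearMap.id := by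
  refine TensorProduct.ext' fun x h => ?_
  set r := ℛ k h
  set s : ∀ i : r.ι, Coalgebra.Repr k (r.left i) (H × H) := fun i => ℛ k (r.left i)
  have lhs : ((TensorProduct.rid k H).toLinearMap
      ∘ₗ map LinearMap.id (counit (R := k) (A := H)) ∘ₗ psiAYD k H Sinv) (x ⊗ₜ[k] h)
      = ∑ i ∈ r.index, ∑ j ∈ (s i).index,
        (counit (R := k) (Sinv ((s i).left j) * x * r.right i)) • (s i).right j := by
    simp only [coe_comp, Function.comp_apply]
    rw [psi_apply k H Sinv x h r s, map_sum, map_sum]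
    refine Finset.sum_congr rfl fun i _ => ?_
    rw [map_sum, map_sum]
    refine Finset.sum_congr rfl fun j _ => ?_
    rw [map_tmul, id_coe, id_eq]
    simp
  rw [lhs]
  have rhs : ((TensorProduct.lid k H).toLinearMap
      ∘ₗ map (counit (R := k) (A := H)) LinearMap.id) (x ⊗ₜ[k] h)
      = counit (R := k) x • h := by simp
  rw [rhs]
  calc ∑ i ∈ r.index, ∑ j ∈ (s i).index,
        (counit (R := k) (Sinv ((s i).left j) * x * r.right i)) • (s i).right j
      = ∑ i ∈ r.index, counit (R := k) x • (counit (R := k) (r.right i) •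
          (∑ j ∈ (s i).index, counit (R := k) ((s i).left j) • (s i).right j)) := by
        refine Finset.sum_congr rfl fun i _ => ?_
        rw [Finset.smul_sum, Finset.smul_sum]
        refine Finset.sum_congr rfl fun j _ => ?_
        rw [Bialgebra.counit_mul, Bialgebra.counit_mul, counit_Sinv k H Sinv hSinv2]
        rw [smul_smul, smul_smul]
        congr 1
        ring
    _ = counit (R := k) x • h := by
        rw [← Finset.smul_sum]
        congr 1
        calc ∑ i ∈ r.index, counit (R := k) (r.right i) •
              (∑ j ∈ (s i).index, counit (R := k) ((s i).left j) • (s i).right j)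
            = ∑ i ∈ r.index, counit (R := k) (r.right i) • r.left i := by
              refine Finset.sum_congr rfl fun i _ => ?_
              rw [sum_counit_smul k (s i)]
          _ = h := sum_smul_counit k r

lemma stmt1 (hSinv1 : Sinv ∘ₗ HopfAlgebra.antipode (R := k) = LinearMap.id)
    (hSinv2 : HopfAlgebra.antipode (R := k) ∘ₗ Sinv = LinearMap.id) :
    psiAYD k H Sinv ∘ₗ map LinearMap.id (mul' k H) =
      map (mul' k H) LinearMap.id
        ∘ₗ (TensorProduct.assoc k H H H).symm.toLinearMap
        ∘ₗ map LinearMap.id (psiAYD k H Sinv)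
        ∘ₗ (TensorProduct.assoc k H H H).toLinearMap
        ∘ₗ map (psiAYD k H Sinv) LinearMap.id
        ∘ₗ (TensorProduct.assoc k H H H).symm.toLinearMap := by
  refine TensorProduct.ext' fun c y => ?_
  induction y using TensorProduct.induction_on with
  | zero => rw [tmul_zero, map_zero, map_zero]
  | add u v hu hv => rw [tmul_add, map_add, map_add, hu, hv]
  | tmul a b =>
    set ra := ℛ k a
    set sa : ∀ i : ra.ι, Coalgebra.Repr k (ra.left i) (H × H) := fun i => ℛ k (ra.left i)
    set rb := ℛ k b
    set sb : ∀ i : rb.ι, Coalgebra.Repr k (rb.left i) (H × H) := fun i => ℛ k (rb.left i)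
    have hDa : (map (Coalgebra.comul (R := k)) LinearMap.id ∘ₗ comul) a
        = ∑ i ∈ ra.index, ∑ p ∈ (sa i).index,
          (((sa i).left p ⊗ₜ[k] (sa i).right p) ⊗ₜ[k] ra.right i) := by
      show map comul LinearMap.id (comul a) = _
      rw [← ra.eq, map_sum]
      refine Finset.sum_congr rfl fun i _ => ?_
      rw [map_tmul, ← (sa i).eq, sum_tmul]
      rfl
    have hDb : (map (Coalgebra.comul (R := k)) LinearMap.id ∘ₗ comul) b
        = ∑ j ∈ rb.index, ∑ q ∈ (sb j).index,
          (((sb j).left q ⊗ₜ[k] (sb j).right q) ⊗ₜ[k] rb.right j) := by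
      show map comul LinearMap.id (comul b) = _
      rw [← rb.eq, map_sum]
      refine Finset.sum_congr rfl fun j _ => ?_
      rw [map_tmul, ← (sb j).eq, sum_tmul]
      rfl
    have lhs : (psiAYD k H Sinv ∘ₗ map LinearMap.id (mul' k H)) (c ⊗ₜ[k] (a ⊗ₜ[k] b))
        = ∑ i ∈ ra.index, ∑ j ∈ rb.index, ∑ p ∈ (sa i).index, ∑ q ∈ (sb j).index,
          ((sa i).right p * (sb j).right q) ⊗ₜ[k]
            (Sinv ((sa i).left p * (sb j).left q) * c * (ra.right i * rb.right j)) := by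
      have e0 : (psiAYD k H Sinv ∘ₗ map LinearMap.id (mul' k H)) (c ⊗ₜ[k] (a ⊗ₜ[k] b))
          = psiAYD k H Sinv (c ⊗ₜ[k] (a * b)) := rfl
      rw [e0, psiAYD_eq]
      show psiTail k H Sinv
        (map LinearMap.id (map comul LinearMap.id ∘ₗ comul) (c ⊗ₜ[k] (a * b))) = _
      rw [map_tmul, id_coe, id_eq, D_mul, hDa, hDb, Finset.sum_mul_sum]
      rw [tmul_sum, map_sum]
      refine Finset.sum_congr rfl fun i _ => ?_
      rw [tmul_sum, map_sum]
      refine Finset.sum_congr rfl fun j _ => ?_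
      rw [Finset.sum_mul_sum, tmul_sum, map_sum]
      refine Finset.sum_congr rfl fun p _ => ?_
      rw [tmul_sum, map_sum]
      refine Finset.sum_congr rfl fun q _ => ?_
      rw [Algebra.TensorProduct.tmul_mul_tmul, Algebra.TensorProduct.tmul_mul_tmul]
      exact psiTail_tmul k H Sinv _ _ _ _
    rw [lhs]
    have rhs : (map (mul' k H) LinearMap.id
        ∘ₗ (TensorProduct.assoc k H H H).symm.toLinearMap
        ∘ₗ map LinearMap.id (psiAYD k H Sinv)
        ∘ₗ (TensorProduct.assoc k H H H).toLinearMap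
        ∘ₗ map (psiAYD k H Sinv) LinearMap.id
        ∘ₗ (TensorProduct.assoc k H H H).symm.toLinearMap) (c ⊗ₜ[k] (a ⊗ₜ[k] b))
        = ∑ i ∈ ra.index, ∑ p ∈ (sa i).index, ∑ j ∈ rb.index, ∑ q ∈ (sb j).index,
          ((sa i).right p * (sb j).right q) ⊗ₜ[k]
            (Sinv ((sb j).left q) * (Sinv ((sa i).left p) * c * ra.right i) * rb.right j) := by
      simp only [coe_comp, Function.comp_apply, LinearEquiv.coe_coe]
      rw [assoc_symm_tmul, map_tmul, psi_apply k H Sinv c a ra sa, id_coe, id_eq]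
      simp only [sum_tmul, map_sum]
      refine Finset.sum_congr rfl fun i _ => Finset.sum_congr rfl fun p _ => ?_
      rw [assoc_tmul, map_tmul, id_coe, id_eq, psi_apply k H Sinv _ b rb sb]
      simp only [tmul_sum, map_sum]
      refine Finset.sum_congr rfl fun j _ => Finset.sum_congr rfl fun q _ => ?_
      rw [assoc_symm_tmul, map_tmul, id_coe, id_eq, mul'_apply]
    rw [rhs]
    refine Finset.sum_congr rfl fun i _ => ?_
    rw [Finset.sum_comm]
    refine Finset.sum_congr rfl fun p _ =>
      Finset.sum_congr rfl fun j _ => Finset.sum_congr rfl fun q _ => ?_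
    congr 1
    rw [Sinv_mul k H Sinv hSinv1 hSinv2]
    simp only [mul_assoc]

end Psi

/-- reassociator `(a⊗(b⊗c))⊗(d⊗e) ↦ a⊗(b⊗(c⊗(d⊗e)))` -/
def Jmap : (H ⊗[k] (H ⊗[k] H)) ⊗[k] (H ⊗[k] H) →ₗ[k] H ⊗[k] (H ⊗[k] (H ⊗[k] (H ⊗[k] H))) :=
  LinearMap.lTensor H (TensorProduct.assoc k H H (H ⊗[k] H)).toLinearMap
    ∘ₗ (TensorProduct.assoc k H (H ⊗[k] H) (H ⊗[k] H)).toLinearMap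

lemma Jmap_tmul (a b c d e : H) :
    Jmap k H ((a ⊗ₜ[k] (b ⊗ₜ[k] c)) ⊗ₜ[k] (d ⊗ₜ[k] e))
      = a ⊗ₜ[k] (b ⊗ₜ[k] (c ⊗ₜ[k] (d ⊗ₜ[k] e))) := by
  simp [Jmap]

lemma exp5 (h : H) (r : Coalgebra.Repr k h (H × H))
    (s : ∀ i : r.ι, Coalgebra.Repr k (r.left i) (H × H))
    (t : ∀ i : r.ι, ∀ j : (s i).ι, Coalgebra.Repr k ((s i).left j) (H × H))
    (v : ∀ i : r.ι, ∀ j : (s i).ι, Coalgebra.Repr k ((s i).right j) (H × H))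
    (w : ∀ i : r.ι, ∀ j : (s i).ι, ∀ p : (v i j).ι, Coalgebra.Repr k ((v i j).left p) (H × H))
    (u : ∀ i : r.ι, Coalgebra.Repr k (r.right i) (H × H)) :
    ∑ i ∈ r.index, ∑ j ∈ (s i).index, ∑ m ∈ (t i j).index, ∑ n ∈ (u i).index,
      (t i j).left m ⊗ₜ[k] ((t i j).right m ⊗ₜ[k] ((s i).right j ⊗ₜ[k]
        ((u i).left n ⊗ₜ[k] (u i).right n)))
    = ∑ i ∈ r.index, ∑ j ∈ (s i).index, ∑ p ∈ (v i j).index, ∑ m ∈ (w i j p).index,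
      (s i).left j ⊗ₜ[k] ((w i j p).left m ⊗ₜ[k] ((w i j p).right m ⊗ₜ[k]
        ((v i j).right p ⊗ₜ[k] r.right i))) := by
  set x : ∀ i : r.ι, ∀ j : (s i).ι, ∀ m : (t i j).ι, Coalgebra.Repr k ((t i j).right m) (H × H) :=
    fun i j m => ℛ k ((t i j).right m)
  -- step M1 : A = C  (order of C : i, j, p, n)
  have M1 : ∑ i ∈ r.index, ∑ j ∈ (s i).index, ∑ m ∈ (t i j).index, ∑ n ∈ (u i).index,
      (t i j).left m ⊗ₜ[k] ((t i j).right m ⊗ₜ[k] ((s i).right j ⊗ₜ[k]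
        ((u i).left n ⊗ₜ[k] (u i).right n)))
      = ∑ i ∈ r.index, ∑ j ∈ (s i).index, ∑ p ∈ (v i j).index, ∑ n ∈ (u i).index,
      (s i).left j ⊗ₜ[k] ((v i j).left p ⊗ₜ[k] ((v i j).right p ⊗ₜ[k]
        ((u i).left n ⊗ₜ[k] (u i).right n))) := by
    refine Finset.sum_congr rfl fun i _ => ?_
    have key1 := Coalgebra.sum_tmul_tmul_eq (s i) (t i) (v i)
    apply_fun (LinearMap.lTensor H (LinearMap.lTensor H
      ((TensorProduct.mk k H (H ⊗[k] H)).flip (comul (r.right i))))) at key1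
    simp only [map_sum, lTensor_tmul, mk_apply, flip_apply] at key1
    calc ∑ j ∈ (s i).index, ∑ m ∈ (t i j).index, ∑ n ∈ (u i).index,
        (t i j).left m ⊗ₜ[k] ((t i j).right m ⊗ₜ[k] ((s i).right j ⊗ₜ[k]
          ((u i).left n ⊗ₜ[k] (u i).right n)))
        = ∑ j ∈ (s i).index, ∑ m ∈ (t i j).index,
          (t i j).left m ⊗ₜ[k] ((t i j).right m ⊗ₜ[k]
            ((s i).right j ⊗ₜ[k] comul (r.right i))) := by
          refine Finset.sum_congr rfl fun j _ => Finset.sum_congr rfl fun m _ => ?_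
          rw [← (u i).eq, tmul_sum, tmul_sum, tmul_sum]
      _ = ∑ j ∈ (s i).index, ∑ p ∈ (v i j).index,
          (s i).left j ⊗ₜ[k] ((v i j).left p ⊗ₜ[k]
            ((v i j).right p ⊗ₜ[k] comul (r.right i))) := key1
      _ = ∑ j ∈ (s i).index, ∑ p ∈ (v i j).index, ∑ n ∈ (u i).index,
          (s i).left j ⊗ₜ[k] ((v i j).left p ⊗ₜ[k] ((v i j).right p ⊗ₜ[k]
            ((u i).left n ⊗ₜ[k] (u i).right n))) := by
          refine Finset.sum_congr rfl fun j _ => Finset.sum_congr rfl fun p _ => ?_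
          rw [← (u i).eq, tmul_sum, tmul_sum, tmul_sum]
  rw [M1]
  -- step M2 : C = E, via the top-level coassociativity move
  have K := Coalgebra.sum_tmul_tmul_eq r s u
  apply_fun (Jmap k H ∘ₗ LinearMap.rTensor (H ⊗[k] H)
    (LinearMap.lTensor H (Coalgebra.comul (R := k)) ∘ₗ Coalgebra.comul (R := k))) at K
  simp only [map_sum, coe_comp, Function.comp_apply, rTensor_tmul] at K
  have M2 : ∑ i ∈ r.index, ∑ j ∈ (s i).index, ∑ p ∈ (v i j).index, ∑ n ∈ (u i).index,
      (s i).left j ⊗ₜ[k] ((v i j).left p ⊗ₜ[k] ((v i j).right p ⊗ₜ[k]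
        ((u i).left n ⊗ₜ[k] (u i).right n)))
      = ∑ i ∈ r.index, ∑ j ∈ (s i).index, ∑ m ∈ (t i j).index, ∑ e ∈ (x i j m).index,
      (t i j).left m ⊗ₜ[k] ((x i j m).left e ⊗ₜ[k] ((x i j m).right e ⊗ₜ[k]
        ((s i).right j ⊗ₜ[k] r.right i))) := by
    have lhsK : ∀ i ∈ r.index, ∀ n ∈ (u i).index,
        Jmap k H (((LinearMap.lTensor H (Coalgebra.comul (R := k)))
            (Coalgebra.comul (R := k) (r.left i))) ⊗ₜ[k]
          ((u i).left n ⊗ₜ[k] (u i).right n))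
        = ∑ j ∈ (s i).index, ∑ p ∈ (v i j).index,
          (s i).left j ⊗ₜ[k] ((v i j).left p ⊗ₜ[k] ((v i j).right p ⊗ₜ[k]
            ((u i).left n ⊗ₜ[k] (u i).right n))) := by
      intro i _ n _
      have : (LinearMap.lTensor H (Coalgebra.comul (R := k)))
          (Coalgebra.comul (R := k) (r.left i))
          = ∑ j ∈ (s i).index, ∑ p ∈ (v i j).index,
            (s i).left j ⊗ₜ[k] ((v i j).left p ⊗ₜ[k] (v i j).right p) := by
        rw [← (s i).eq, map_sum]
        refine Finset.sum_congr rfl fun j _ => ?_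
        rw [lTensor_tmul, ← (v i j).eq, tmul_sum]
      rw [this, sum_tmul, map_sum]
      refine Finset.sum_congr rfl fun j _ => ?_
      rw [sum_tmul, map_sum]
      exact Finset.sum_congr rfl fun p _ => Jmap_tmul k H _ _ _ _ _
    have rhsK : ∀ i ∈ r.index, ∀ j ∈ (s i).index,
        Jmap k H (((LinearMap.lTensor H (Coalgebra.comul (R := k)))
            (Coalgebra.comul (R := k) ((s i).left j))) ⊗ₜ[k]
          ((s i).right j ⊗ₜ[k] r.right i))
        = ∑ m ∈ (t i j).index, ∑ e ∈ (x i j m).index,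
          (t i j).left m ⊗ₜ[k] ((x i j m).left e ⊗ₜ[k] ((x i j m).right e ⊗ₜ[k]
            ((s i).right j ⊗ₜ[k] r.right i))) := by
      intro i _ j _
      have : (LinearMap.lTensor H (Coalgebra.comul (R := k)))
          (Coalgebra.comul (R := k) ((s i).left j))
          = ∑ m ∈ (t i j).index, ∑ e ∈ (x i j m).index,
            (t i j).left m ⊗ₜ[k] ((x i j m).left e ⊗ₜ[k] (x i j m).right e) := by
        rw [← (t i j).eq, map_sum]
        refine Finset.sum_congr rfl fun m _ => ?_
        rw [lTensor_tmul, ← (x i j m).eq, tmul_sum]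
      rw [this, sum_tmul, map_sum]
      refine Finset.sum_congr rfl fun m _ => ?_
      rw [sum_tmul, map_sum]
      exact Finset.sum_congr rfl fun e _ => Jmap_tmul k H _ _ _ _ _
    calc ∑ i ∈ r.index, ∑ j ∈ (s i).index, ∑ p ∈ (v i j).index, ∑ n ∈ (u i).index,
        (s i).left j ⊗ₜ[k] ((v i j).left p ⊗ₜ[k] ((v i j).right p ⊗ₜ[k]
          ((u i).left n ⊗ₜ[k] (u i).right n)))
        = ∑ i ∈ r.index, ∑ n ∈ (u i).index, ∑ j ∈ (s i).index, ∑ p ∈ (v i j).index,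
          (s i).left j ⊗ₜ[k] ((v i j).left p ⊗ₜ[k] ((v i j).right p ⊗ₜ[k]
            ((u i).left n ⊗ₜ[k] (u i).right n))) := by
          refine Finset.sum_congr rfl fun i _ => ?_
          rw [← Finset.sum_comm]
          exact Finset.sum_congr rfl fun j _ => Finset.sum_comm
      _ = ∑ i ∈ r.index, ∑ n ∈ (u i).index,
          Jmap k H (((LinearMap.lTensor H (Coalgebra.comul (R := k)))
            (Coalgebra.comul (R := k) (r.left i))) ⊗ₜ[k]
            ((u i).left n ⊗ₜ[k] (u i).right n)) := by
          refine Finset.sum_congr rfl fun i hi => Finset.sum_congr rfl fun n hn => ?_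
          rw [lhsK i hi n hn]
      _ = ∑ i ∈ r.index, ∑ j ∈ (s i).index,
          Jmap k H (((LinearMap.lTensor H (Coalgebra.comul (R := k)))
            (Coalgebra.comul (R := k) ((s i).left j))) ⊗ₜ[k]
            ((s i).right j ⊗ₜ[k] r.right i)) := K.symm
      _ = ∑ i ∈ r.index, ∑ j ∈ (s i).index, ∑ m ∈ (t i j).index, ∑ e ∈ (x i j m).index,
          (t i j).left m ⊗ₜ[k] ((x i j m).left e ⊗ₜ[k] ((x i j m).right e ⊗ₜ[k]
            ((s i).right j ⊗ₜ[k] r.right i))) := by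
          refine Finset.sum_congr rfl fun i hi => Finset.sum_congr rfl fun j hj => ?_
          rw [rhsK i hi j hj]
  rw [M2]
  -- step M3 : E = B
  refine Finset.sum_congr rfl fun i _ => ?_
  have key3 := congrArg (fun z => (LinearMap.lTensor H
    ((TensorProduct.assoc k H H (H ⊗[k] H)).toLinearMap
      ∘ₗ map (Coalgebra.comul (R := k)) ((TensorProduct.mk k H H).flip (r.right i)))) z)
    (Coalgebra.sum_tmul_tmul_eq (s i) (t i) (v i))
  simp only [map_sum, lTensor_tmul, coe_comp, Function.comp_apply, map_tmul,
    mk_apply, flip_apply, LinearEquiv.coe_coe, id_coe, id_eq] at key3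
  calc ∑ j ∈ (s i).index, ∑ m ∈ (t i j).index, ∑ e ∈ (x i j m).index,
      (t i j).left m ⊗ₜ[k] ((x i j m).left e ⊗ₜ[k] ((x i j m).right e ⊗ₜ[k]
        ((s i).right j ⊗ₜ[k] r.right i)))
      = ∑ j ∈ (s i).index, ∑ m ∈ (t i j).index,
        (t i j).left m ⊗ₜ[k] (TensorProduct.assoc k H H (H ⊗[k] H))
          (comul ((t i j).right m) ⊗ₜ[k] ((s i).right j ⊗ₜ[k] r.right i)) := by
        refine Finset.sum_congr rfl fun j _ => Finset.sum_congr rfl fun m _ => ?_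
        rw [← (x i j m).eq, sum_tmul, map_sum, tmul_sum]
        exact Finset.sum_congr rfl fun e _ => by rw [assoc_tmul]
    _ = ∑ j ∈ (s i).index, ∑ p ∈ (v i j).index,
        (s i).left j ⊗ₜ[k] (TensorProduct.assoc k H H (H ⊗[k] H))
          (comul ((v i j).left p) ⊗ₜ[k] ((v i j).right p ⊗ₜ[k] r.right i)) := key3
    _ = ∑ j ∈ (s i).index, ∑ p ∈ (v i j).index, ∑ m ∈ (w i j p).index,
        (s i).left j ⊗ₜ[k] ((w i j p).left m ⊗ₜ[k] ((w i j p).right m ⊗ₜ[k]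
          ((v i j).right p ⊗ₜ[k] r.right i))) := by
        refine Finset.sum_congr rfl fun j _ => Finset.sum_congr rfl fun p _ => ?_
        rw [← (w i j p).eq, sum_tmul, map_sum, tmul_sum]
        exact Finset.sum_congr rfl fun m _ => by rw [assoc_tmul]
section Theta
variable (Sinv : H →ₗ[k] H)

/-- `c ⊗ (x ⊗ y) ↦ Sinv x * c * y` -/
def pair3 : H ⊗[k] (H ⊗[k] H) →ₗ[k] H :=
  mul' k H ∘ₗ map (mul' k H) LinearMap.id
    ∘ₗ (TensorProduct.assoc k H H H).symm.toLinearMap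
    ∘ₗ map Sinv LinearMap.id
    ∘ₗ (TensorProduct.leftComm k H H H).toLinearMap

lemma pair3_tmul (c x y : H) :
    pair3 k H Sinv (c ⊗ₜ[k] (x ⊗ₜ[k] y)) = Sinv x * c * y := by
  simp [pair3, TensorProduct.leftComm]

/-- permutation `h1⊗(h2⊗(h3⊗(h4⊗h5))) ↦ h3⊗((h2⊗h4)⊗(h1⊗h5))` -/
def sigma5 : H ⊗[k] (H ⊗[k] (H ⊗[k] (H ⊗[k] H))) →ₗ[k]
    H ⊗[k] ((H ⊗[k] H) ⊗[k] (H ⊗[k] H)) :=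
  LinearMap.lTensor H (TensorProduct.assoc k H H (H ⊗[k] H)).symm.toLinearMap
    ∘ₗ LinearMap.lTensor H (LinearMap.lTensor H (TensorProduct.leftComm k H H H).toLinearMap)
    ∘ₗ (TensorProduct.leftComm k H H (H ⊗[k] (H ⊗[k] H))).toLinearMap
    ∘ₗ LinearMap.lTensor H (TensorProduct.leftComm k H H (H ⊗[k] H)).toLinearMap
    ∘ₗ (TensorProduct.leftComm k H H (H ⊗[k] (H ⊗[k] H))).toLinearMap

lemma sigma5_tmul (h1 h2 h3 h4 h5 : H) :
    sigma5 k H (h1 ⊗ₜ[k] (h2 ⊗ₜ[k] (h3 ⊗ₜ[k] (h4 ⊗ₜ[k] h5))))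
      = h3 ⊗ₜ[k] ((h2 ⊗ₜ[k] h4) ⊗ₜ[k] (h1 ⊗ₜ[k] h5)) := by
  simp [sigma5, TensorProduct.leftComm]

/-- `(c1⊗c2) ⊗ (h1⊗(h2⊗(h3⊗(h4⊗h5)))) ↦ h3 ⊗ ((Sinv h2 * c1 * h4) ⊗ (Sinv h1 * c2 * h5))` -/
def thetaB : (H ⊗[k] H) ⊗[k] (H ⊗[k] (H ⊗[k] (H ⊗[k] (H ⊗[k] H)))) →ₗ[k]
    H ⊗[k] (H ⊗[k] H) :=
  map LinearMap.id (map (pair3 k H Sinv) (pair3 k H Sinv))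
    ∘ₗ LinearMap.lTensor H
        (TensorProduct.tensorTensorTensorComm k H H (H ⊗[k] H) (H ⊗[k] H)).toLinearMap
    ∘ₗ (TensorProduct.leftComm k (H ⊗[k] H) H ((H ⊗[k] H) ⊗[k] (H ⊗[k] H))).toLinearMap
    ∘ₗ LinearMap.lTensor (H ⊗[k] H) (sigma5 k H)

lemma thetaB_tmul (c1 c2 h1 h2 h3 h4 h5 : H) :
    thetaB k H Sinv ((c1 ⊗ₜ[k] c2) ⊗ₜ[k] (h1 ⊗ₜ[k] (h2 ⊗ₜ[k] (h3 ⊗ₜ[k] (h4 ⊗ₜ[k] h5)))))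
      = h3 ⊗ₜ[k] ((Sinv h2 * c1 * h4) ⊗ₜ[k] (Sinv h1 * c2 * h5)) := by
  have e1 : (LinearMap.lTensor (H ⊗[k] H) (sigma5 k H))
      ((c1 ⊗ₜ[k] c2) ⊗ₜ[k] (h1 ⊗ₜ[k] (h2 ⊗ₜ[k] (h3 ⊗ₜ[k] (h4 ⊗ₜ[k] h5)))))
      = (c1 ⊗ₜ[k] c2) ⊗ₜ[k] (h3 ⊗ₜ[k] ((h2 ⊗ₜ[k] h4) ⊗ₜ[k] (h1 ⊗ₜ[k] h5))) := by
    rw [lTensor_tmul, sigma5_tmul]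
  show (map LinearMap.id (map (pair3 k H Sinv) (pair3 k H Sinv)))
      ((LinearMap.lTensor H
        (TensorProduct.tensorTensorTensorComm k H H (H ⊗[k] H) (H ⊗[k] H)).toLinearMap)
      ((TensorProduct.leftComm k (H ⊗[k] H) H ((H ⊗[k] H) ⊗[k] (H ⊗[k] H))).toLinearMap
      ((LinearMap.lTensor (H ⊗[k] H) (sigma5 k H))
        ((c1 ⊗ₜ[k] c2) ⊗ₜ[k] (h1 ⊗ₜ[k] (h2 ⊗ₜ[k] (h3 ⊗ₜ[k] (h4 ⊗ₜ[k] h5)))))))) = _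
  rw [e1]
  simp only [LinearEquiv.coe_coe, TensorProduct.leftComm_tmul, lTensor_tmul,
    tensorTensorTensorComm_tmul, map_tmul, id_coe, id_eq, pair3_tmul]

lemma stmt2 (hSinv1 : Sinv ∘ₗ HopfAlgebra.antipode (R := k) = LinearMap.id)
    (hSinv2 : HopfAlgebra.antipode (R := k) ∘ₗ Sinv = LinearMap.id) :
    map LinearMap.id comul ∘ₗ psiAYD k H Sinv =
      (TensorProduct.assoc k H H H).toLinearMap
        ∘ₗ map (psiAYD k H Sinv) LinearMap.id
        ∘ₗ (TensorProduct.assoc k H H H).symm.toLinearMap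
        ∘ₗ map LinearMap.id (psiAYD k H Sinv)
        ∘ₗ (TensorProduct.assoc k H H H).toLinearMap
        ∘ₗ map comul LinearMap.id := by
  refine TensorProduct.ext' fun c h => ?_
  set r := ℛ k h
  set s : ∀ i : r.ι, Coalgebra.Repr k (r.left i) (H × H) := fun i => ℛ k (r.left i)
  set t : ∀ i : r.ι, ∀ j : (s i).ι, Coalgebra.Repr k ((s i).left j) (H × H) :=
    fun i j => ℛ k ((s i).left j)
  set v : ∀ i : r.ι, ∀ j : (s i).ι, Coalgebra.Repr k ((s i).right j) (H × H) :=
    fun i j => ℛ k ((s i).right j)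
  set w : ∀ i : r.ι, ∀ j : (s i).ι, ∀ p : (v i j).ι, Coalgebra.Repr k ((v i j).left p) (H × H) :=
    fun i j p => ℛ k ((v i j).left p)
  set u : ∀ i : r.ι, Coalgebra.Repr k (r.right i) (H × H) := fun i => ℛ k (r.right i)
  set tc := ℛ k c
  have key2 := congrArg (fun z => thetaB k H Sinv ((Coalgebra.comul (R := k) c) ⊗ₜ[k] z))
    (exp5 k H h r s t v w u)
  beta_reduce at key2
  have keyLHS : thetaB k H Sinv ((Coalgebra.comul (R := k) c) ⊗ₜ[k]
      (∑ i ∈ r.index, ∑ j ∈ (s i).index, ∑ m ∈ (t i j).index, ∑ n ∈ (u i).index,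
        (t i j).left m ⊗ₜ[k] ((t i j).right m ⊗ₜ[k] ((s i).right j ⊗ₜ[k]
          ((u i).left n ⊗ₜ[k] (u i).right n)))))
      = ∑ q ∈ tc.index, ∑ i ∈ r.index, ∑ j ∈ (s i).index, ∑ m ∈ (t i j).index,
          ∑ n ∈ (u i).index,
        (s i).right j ⊗ₜ[k] ((Sinv ((t i j).right m) * tc.left q * (u i).left n) ⊗ₜ[k]
          (Sinv ((t i j).left m) * tc.right q * (u i).right n)) := by
    rw [← tc.eq, sum_tmul, map_sum]
    refine Finset.sum_congr rfl fun q _ => ?_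
    simp only [tmul_sum, map_sum]
    exact Finset.sum_congr rfl fun i _ => Finset.sum_congr rfl fun j _ =>
      Finset.sum_congr rfl fun m _ => Finset.sum_congr rfl fun n _ =>
        thetaB_tmul k H Sinv _ _ _ _ _ _ _
  have keyRHS : thetaB k H Sinv ((Coalgebra.comul (R := k) c) ⊗ₜ[k]
      (∑ i ∈ r.index, ∑ j ∈ (s i).index, ∑ p ∈ (v i j).index, ∑ m ∈ (w i j p).index,
        (s i).left j ⊗ₜ[k] ((w i j p).left m ⊗ₜ[k] ((w i j p).right m ⊗ₜ[k]
          ((v i j).right p ⊗ₜ[k] r.right i)))))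
      = ∑ q ∈ tc.index, ∑ i ∈ r.index, ∑ j ∈ (s i).index, ∑ p ∈ (v i j).index,
          ∑ m ∈ (w i j p).index,
        (w i j p).right m ⊗ₜ[k] ((Sinv ((w i j p).left m) * tc.left q * (v i j).right p) ⊗ₜ[k]
          (Sinv ((s i).left j) * tc.right q * r.right i)) := by
    rw [← tc.eq, sum_tmul, map_sum]
    refine Finset.sum_congr rfl fun q _ => ?_
    simp only [tmul_sum, map_sum]
    exact Finset.sum_congr rfl fun i _ => Finset.sum_congr rfl fun j _ =>
      Finset.sum_congr rfl fun p _ => Finset.sum_congr rfl fun m _ =>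
        thetaB_tmul k H Sinv _ _ _ _ _ _ _
  rw [keyLHS, keyRHS] at key2
  have lhs : (map LinearMap.id (Coalgebra.comul (R := k)) ∘ₗ psiAYD k H Sinv) (c ⊗ₜ[k] h)
      = ∑ i ∈ r.index, ∑ j ∈ (s i).index, ∑ m ∈ (t i j).index, ∑ q ∈ tc.index,
          ∑ n ∈ (u i).index,
        (s i).right j ⊗ₜ[k] ((Sinv ((t i j).right m) * tc.left q * (u i).left n) ⊗ₜ[k]
          (Sinv ((t i j).left m) * tc.right q * (u i).right n)) := by
    show map LinearMap.id (Coalgebra.comul (R := k)) (psiAYD k H Sinv (c ⊗ₜ[k] h)) = _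
    rw [psi_apply k H Sinv c h r s]
    simp only [map_sum]
    refine Finset.sum_congr rfl fun i _ => Finset.sum_congr rfl fun j _ => ?_
    rw [map_tmul, id_coe, id_eq]
    rw [Bialgebra.comul_mul, Bialgebra.comul_mul]
    rw [Sinv_comul_repr k H Sinv hSinv1 hSinv2 _ (t i j), ← tc.eq, ← (u i).eq]
    rw [Finset.sum_mul_sum, Finset.sum_mul]
    rw [tmul_sum]
    refine Finset.sum_congr rfl fun m _ => ?_
    rw [Finset.sum_mul, tmul_sum]
    refine Finset.sum_congr rfl fun q _ => ?_
    rw [Finset.mul_sum, tmul_sum]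
    refine Finset.sum_congr rfl fun n _ => ?_
    rw [Algebra.TensorProduct.tmul_mul_tmul, Algebra.TensorProduct.tmul_mul_tmul]
  have rhs : ((TensorProduct.assoc k H H H).toLinearMap
        ∘ₗ map (psiAYD k H Sinv) LinearMap.id
        ∘ₗ (TensorProduct.assoc k H H H).symm.toLinearMap
        ∘ₗ map LinearMap.id (psiAYD k H Sinv)
        ∘ₗ (TensorProduct.assoc k H H H).toLinearMap
        ∘ₗ map comul LinearMap.id) (c ⊗ₜ[k] h)
      = ∑ q ∈ tc.index, ∑ i ∈ r.index, ∑ j ∈ (s i).index, ∑ p ∈ (v i j).index,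
          ∑ m ∈ (w i j p).index,
        (w i j p).right m ⊗ₜ[k] ((Sinv ((w i j p).left m) * tc.left q * (v i j).right p) ⊗ₜ[k]
          (Sinv ((s i).left j) * tc.right q * r.right i)) := by
    simp only [coe_comp, Function.comp_apply, LinearEquiv.coe_coe]
    rw [map_tmul, id_coe, id_eq, ← tc.eq]
    simp only [sum_tmul, map_sum]
    refine Finset.sum_congr rfl fun q _ => ?_
    rw [assoc_tmul, map_tmul, id_coe, id_eq, psi_apply k H Sinv _ h r s]
    simp only [tmul_sum, map_sum]
    refine Finset.sum_congr rfl fun i _ => Finset.sum_congr rfl fun j _ => ?_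
    rw [assoc_symm_tmul, map_tmul, id_coe, id_eq,
      psi_apply k H Sinv _ ((s i).right j) (v i j) (w i j)]
    simp only [sum_tmul, map_sum]
    refine Finset.sum_congr rfl fun p _ => Finset.sum_congr rfl fun m _ => ?_
    rw [assoc_tmul]
  rw [lhs, rhs, ← key2]
  -- reorder sums : move q outermost
  calc ∑ i ∈ r.index, ∑ j ∈ (s i).index, ∑ m ∈ (t i j).index, ∑ q ∈ tc.index,
          ∑ n ∈ (u i).index,
        (s i).right j ⊗ₜ[k] ((Sinv ((t i j).right m) * tc.left q * (u i).left n) ⊗ₜ[k]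
          (Sinv ((t i j).left m) * tc.right q * (u i).right n))
      = ∑ i ∈ r.index, ∑ j ∈ (s i).index, ∑ q ∈ tc.index, ∑ m ∈ (t i j).index,
          ∑ n ∈ (u i).index,
        (s i).right j ⊗ₜ[k] ((Sinv ((t i j).right m) * tc.left q * (u i).left n) ⊗ₜ[k]
          (Sinv ((t i j).left m) * tc.right q * (u i).right n)) := by
        exact Finset.sum_congr rfl fun i _ => Finset.sum_congr rfl fun j _ => Finset.sum_comm
    _ = ∑ i ∈ r.index, ∑ q ∈ tc.index, ∑ j ∈ (s i).index, ∑ m ∈ (t i j).index,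
          ∑ n ∈ (u i).index,
        (s i).right j ⊗ₜ[k] ((Sinv ((t i j).right m) * tc.left q * (u i).left n) ⊗ₜ[k]
          (Sinv ((t i j).left m) * tc.right q * (u i).right n)) := by
        exact Finset.sum_congr rfl fun i _ => Finset.sum_comm
    _ = ∑ q ∈ tc.index, ∑ i ∈ r.index, ∑ j ∈ (s i).index, ∑ m ∈ (t i j).index,
          ∑ n ∈ (u i).index,
        (s i).right j ⊗ₜ[k] ((Sinv ((t i j).right m) * tc.left q * (u i).left n) ⊗ₜ[k]
          (Sinv ((t i j).left m) * tc.right q * (u i).right n)) := Finset.sum_comm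

end Theta
end Hopf

theorem statement7
    (Sinv : H →ₗ[k] H)
    (hSinv1 : Sinv ∘ₗ HopfAlgebra.antipode (R := k) = LinearMap.id)
    (hSinv2 : HopfAlgebra.antipode (R := k) ∘ₗ Sinv = LinearMap.id) :
    -- `ψ` is an entwining structure on `H`:
    -- (1) multiplicativity: `ψ(c ⊗ ab) = (μ⊗id)(id⊗ψ)(ψ⊗id)(c⊗a⊗b)`
    (psiAYD k H Sinv ∘ₗ map LinearMap.id (mul' k H) =
      map (mul' k H) LinearMap.id
        ∘ₗ (TensorProduct.assoc k H H H).symm.toLinearMap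
        ∘ₗ map LinearMap.id (psiAYD k H Sinv)
        ∘ₗ (TensorProduct.assoc k H H H).toLinearMap
        ∘ₗ map (psiAYD k H Sinv) LinearMap.id
        ∘ₗ (TensorProduct.assoc k H H H).symm.toLinearMap) ∧
    -- (2) comultiplicativity: `(id⊗Δ)∘ψ = (ψ⊗id)(id⊗ψ)(Δ⊗id)`
    (map LinearMap.id comul ∘ₗ psiAYD k H Sinv =
      (TensorProduct.assoc k H H H).toLinearMap
        ∘ₗ map (psiAYD k H Sinv) LinearMap.id
        ∘ₗ (TensorProduct.assoc k H H H).symm.toLinearMap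
        ∘ₗ map LinearMap.id (psiAYD k H Sinv)
        ∘ₗ (TensorProduct.assoc k H H H).toLinearMap
        ∘ₗ map comul LinearMap.id) ∧
    -- (3) unitality: `ψ(h' ⊗ 1) = 1 ⊗ h'`
    (∀ h' : H, psiAYD k H Sinv (h' ⊗ₜ[k] (1 : H)) = (1 : H) ⊗ₜ[k] h') ∧
    -- (4) counitality: `(id⊗ε)∘ψ = ε⊗id`
    ((TensorProduct.rid k H).toLinearMap
        ∘ₗ map LinearMap.id (counit (R := k) (A := H)) ∘ₗ psiAYD k H Sinv =
      (TensorProduct.lid k H).toLinearMap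
        ∘ₗ map (counit (R := k) (A := H)) LinearMap.id) := by
  exact ⟨stmt1 k H Sinv hSinv1 hSinv2, stmt2 k H Sinv hSinv1 hSinv2,
    fun h' => stmt3 k H Sinv hSinv1 h', stmt4 k H Sinv hSinv2⟩
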